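/- arXiv:2310.19414 — 2 statements merged into one kernel-verified Lean document; each statement's English description precedes it below -/
import Mathlib

section
/- Assume id_I ∈ S(I). Let f ∈ T_{S(I)}(X,P). Then f is unit-regular in T_{S(I)}(X,P) (i.e., fuf = f for some unit u of T_{S(I)}(X,P)) if and only if there exists a unit α of S(I) such that: (i) χ^(f) α χ^(f) = χ^(f); (ii) X_i ∩ Xf ⊆ X_{iα} f for all i in the image of χ^(f); (iii) |X_i| = |X_{iα}| for all i ∈ I; and (iv) c(f↾X_{iα}) = d(f↾X_{iα}) for all i in the image of χ^(f), where f↾X_{iα} is regarded as a map X_{iα} → X_i, c denotes the collapse (cardinality of the complement of a transversal of the kernel) and d the defect (cardinality of the complement of the image). -/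
open Function Set

/-- `c : I → I` is the character of `f` w.r.t. the partition of `X` whose blocks are
the fibers of `idx : X → I`: the block `X_i = idx⁻¹{i}` is mapped by `f` into `X_{c i}`. -/
def IsChar {X I : Type*} (idx : X → I) (f : X → X) (c : I → I) : Prop :=
  ∀ x, c (idx x) = idx (f x)

/-- `f` preserves the partition, i.e. `f ∈ T(X,P)`. -/
def PresP {X I : Type*} (idx : X → I) (f : X → X) : Prop :=
  ∃ c, IsChar idx f c

/-- `f ∈ T_{S(I)}(X,P)`: the character of `f` lies in `S`. -/
def InTS {X I : Type*} (idx : X → I) (S : Set (I → I)) (f : X → X) : Prop :=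
  ∃ c ∈ S, IsChar idx f c

/-- `α` is a unit of the (sub)monoid `S` of `T(I)`. -/
def IsUnitS {I : Type*} (S : Set (I → I)) (α : I → I) : Prop :=
  α ∈ S ∧ ∃ β ∈ S, (∀ i, β (α i) = i) ∧ (∀ i, α (β i) = i)

/-- `u` is a unit of the monoid `T_{S(I)}(X,P)`. -/
def IsUnitTS {X I : Type*} (idx : X → I) (S : Set (I → I)) (u : X → X) : Prop :=
  InTS idx S u ∧ ∃ v, InTS idx S v ∧ (∀ x, v (u x) = x) ∧ (∀ x, u (v x) = x)

/-!
A unit `u` of `T_{S(I)}(X,P)` is a permutation of `X` whose character `α` is a unit of `S(I)`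
(the characters of `u` and `u⁻¹` are inverse because `idx` is onto), and `u` maps each block
`X_i` bijectively onto `X_{iα}`. Conditions (i)–(iv) are exactly what `fuf = f` leaves visible
of `u` block by block: on `X_i` with `i` in the image of `χ(f)`, `u` must send each point of
`X_i ∩ Xf` to a preimage under `f`, which needs (ii) and a transversal of `ker f` on `X_{iα}`,
and the rest of `X_i` must be matched with the rest of `X_{iα}`, which is (iv). Conversely these
block bijections are glued along `α` into a permutation of `X`.
-/

open Cardinal

lemma apply_apply_eq_of_mem_range {I J : Type*} {c : I → J} {α : J → I}
    (h : ∀ i, c (α (c i)) = c i) {j : J} (hj : j ∈ range c) : c (α j) = j := by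
  obtain ⟨i, rfl⟩ := hj
  exact h i

namespace IsChar

variable {X I : Type*} {idx : X → I}

lemma comp {f g : X → X} {cf cg : I → I} (hf : IsChar idx f cf) (hg : IsChar idx g cg) :
    IsChar idx (g ∘ f) (cg ∘ cf) := fun x => by
  simp only [comp_apply, hf x, hg (f x)]

lemma unique (hsurj : Surjective idx) {f : X → X} {c c' : I → I}
    (h : IsChar idx f c) (h' : IsChar idx f c') : c = c' := by
  funext i
  obtain ⟨x, rfl⟩ := hsurj i
  rw [h x, h' x]

lemma leftInverse (hsurj : Surjective idx) {u v : X → X} {cu cv : I → I}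
    (hu : IsChar idx u cu) (hv : IsChar idx v cv) (hvu : LeftInverse v u) :
    LeftInverse cv cu := by
  have hvu_char := hu.comp hv
  rw [hvu.comp_eq_id] at hvu_char
  exact congrFun (hvu_char.unique hsurj fun _ => rfl)

lemma mapsTo {f : X → X} {c : I → I} (h : IsChar idx f c) (i : I) :
    MapsTo f (idx ⁻¹' {i}) (idx ⁻¹' {c i}) := by
  intro x hx
  simp only [mem_preimage, mem_singleton_iff] at hx ⊢
  rw [← h x, hx]

lemma mapsTo_of_eq {f : X → X} {c : I → I} (h : IsChar idx f c) {i j : I} (hij : c j = i) :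
    MapsTo f (idx ⁻¹' {j}) (idx ⁻¹' {i}) :=
  hij ▸ h.mapsTo j

lemma bijOn {u v : X → X} {cu cv : I → I} (hu : IsChar idx u cu) (hv : IsChar idx v cv)
    (hcvu : LeftInverse cv cu) (hvu : LeftInverse v u) (huv : RightInverse v u) (i : I) :
    BijOn u (idx ⁻¹' {i}) (idx ⁻¹' {cu i}) :=
  InvOn.bijOn ⟨fun x _ => hvu x, fun y _ => huv y⟩ (hu.mapsTo i)
    (by simpa only [hcvu i] using hv.mapsTo (cu i))

lemma perm_symm {u : Equiv.Perm X} {σ : Equiv.Perm I} (h : IsChar idx u σ) :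
    IsChar idx u.symm σ.symm := fun y => by
  rw [σ.symm_apply_eq, h, u.apply_symm_apply]

end IsChar

lemma IsUnitTS.exists_isUnitS_bijOn {X I : Type*} {idx : X → I} (hsurj : Surjective idx)
    {S : Set (I → I)} {u : X → X} (hu : IsUnitTS idx S u) :
    ∃ α, IsUnitS S α ∧ IsChar idx u α ∧ ∀ i, BijOn u (idx ⁻¹' {i}) (idx ⁻¹' {α i}) := by
  obtain ⟨⟨α, hαS, hα⟩, v, ⟨β, hβS, hβ⟩, hvu, huv⟩ := hu
  have hβα := hα.leftInverse hsurj hβ hvu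
  exact ⟨α, ⟨hαS, β, hβS, hβα, hβ.leftInverse hsurj hα huv⟩, hα, hα.bijOn hβ hβα hvu huv⟩

section Transversal

universe u

variable {X Y : Type u} {A : Set Y} {B : Set X}

/-- The transversal is `u '' (f '' B)`; its complement in `B` is `u '' (A \ f '' B)`. -/
lemma exists_transversal_of_bijOn (f : X → Y) (u : Y → X) (hu : BijOn u A B)
    (hfuf : ∀ x ∈ B, f (u (f x)) = f x) (hfB : MapsTo f B A) :
    ∃ T ⊆ B, (∀ a ∈ B, ∃! t, t ∈ T ∧ f t = f a) ∧ #↥(B \ T) = #↥(A \ f '' B) := by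
  refine ⟨u '' (f '' B), ?_,
    fun a ha => ⟨u (f a), ⟨⟨f a, ⟨a, ha, rfl⟩, rfl⟩, hfuf a ha⟩, ?_⟩, ?_⟩
  · rintro _ ⟨_, ⟨a, ha, rfl⟩, rfl⟩
    exact hu.mapsTo (hfB ha)
  · rintro _ ⟨⟨_, ⟨a', ha', rfl⟩, rfl⟩, hfa'⟩
    rw [← hfa', hfuf a' ha']
  · have hcompl : B \ u '' (f '' B) = u '' (A \ f '' B) := by
      rw [hu.injOn.image_sdiff_subset hfB.image_subset, hu.image_eq]
    rw [hcompl]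
    exact mk_image_eq_of_injOn u _ (hu.injOn.mono sdiff_subset)

/-- `f` matches `T` with `f '' B ⊆ A`, and the complements are matched by `hcard`. -/
lemma exists_equiv_of_transversal (f : X → Y) {T : Set X} (hfB : MapsTo f B A) (hTB : T ⊆ B)
    (hT : ∀ a ∈ B, ∃! t, t ∈ T ∧ f t = f a) (hcard : #↥(B \ T) = #↥(A \ f '' B)) :
    ∃ e : A ≃ B, ∀ y : A, (y : Y) ∈ f '' B → f (e y) = y := by
  classical
  have hbij : BijOn f T (f '' B) := by
    refine ⟨fun t ht => ⟨t, hTB ht, rfl⟩, fun t ht t' ht' h => ?_, ?_⟩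
    · obtain ⟨s, -, hs⟩ := hT t (hTB ht)
      exact (hs t ⟨ht, rfl⟩).trans (hs t' ⟨ht', h.symm⟩).symm
    · rintro _ ⟨a, ha, rfl⟩
      obtain ⟨t, ⟨ht, hft⟩, -⟩ := hT a ha
      exact ⟨t, ht, hft⟩
  obtain ⟨ec⟩ := Cardinal.eq.mp hcard.symm
  refine ⟨(Equiv.Set.sumDiffSubset hfB.image_subset).symm.trans
    (((hbij.equiv f).symm.sumCongr ec).trans (Equiv.Set.sumDiffSubset hTB)), fun y hy => ?_⟩
  rw [Equiv.trans_apply, Equiv.trans_apply, Equiv.Set.sumDiffSubset_symm_apply_of_mem _ hy,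
    Equiv.sumCongr_apply, Sum.map_inl, Equiv.Set.sumDiffSubset_apply_inl, coe_inclusion]
  exact congrArg Subtype.val ((hbij.equiv f).apply_symm_apply ⟨y, hy⟩)

end Transversal

section Gluing

variable {X I : Type*} (idx : X → I)

def fiberwisePerm (σ : Equiv.Perm I) (e : ∀ i, {x // idx x = i} ≃ {x // idx x = σ i}) :
    Equiv.Perm X :=
  (Equiv.sigmaFiberEquiv idx).symm.trans
    ((Equiv.sigmaCongr σ e).trans (Equiv.sigmaFiberEquiv idx))

variable {idx}

lemma fiberwisePerm_apply (σ : Equiv.Perm I) (e : ∀ i, {x // idx x = i} ≃ {x // idx x = σ i})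
    (x : X) : fiberwisePerm idx σ e x = e (idx x) ⟨x, rfl⟩ := rfl

lemma isChar_fiberwisePerm (σ : Equiv.Perm I)
    (e : ∀ i, {x // idx x = i} ≃ {x // idx x = σ i}) : IsChar idx (fiberwisePerm idx σ e) σ :=
  fun x => by rw [fiberwisePerm_apply]; exact (e (idx x) ⟨x, rfl⟩).2.symm

lemma isUnitTS_of_isChar {S : Set (I → I)} {u : Equiv.Perm X} {σ : Equiv.Perm I}
    (hσ : IsUnitS S σ) (hu : IsChar idx u σ) : IsUnitTS idx S u := by
  obtain ⟨hσS, τ, hτS, hτσ, hστ⟩ := hσ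
  have hτ : ⇑σ.symm = τ := funext fun i => by rw [σ.symm_apply_eq, hστ]
  exact ⟨⟨σ, hσS, hu⟩, u.symm, ⟨σ.symm, hτ ▸ hτS, hu.perm_symm⟩, u.symm_apply_apply,
    u.apply_symm_apply⟩

end Gluing

lemma exists_blockEquiv_of_transversal {X I : Type*} {idx : X → I} {f : X → X} {cf α : I → I}
    (hf : IsChar idx f cf) {i : I} (hfα : cf (α i) = i)
    (hrange : idx ⁻¹' {i} ∩ range f ⊆ f '' (idx ⁻¹' {α i}))
    (htransversal : ∃ T ⊆ idx ⁻¹' {α i}, (∀ a ∈ idx ⁻¹' {α i}, ∃! t, t ∈ T ∧ f t = f a) ∧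
      #↥(idx ⁻¹' {α i} \ T) = #↥(idx ⁻¹' {i} \ (f '' (idx ⁻¹' {α i})))) :
    ∃ e : {x // idx x = i} ≃ {x // idx x = α i},
      ∀ y : {x // idx x = i}, (y : X) ∈ range f → f (e y) = y := by
  obtain ⟨T, hTB, hT, hTcard⟩ := htransversal
  obtain ⟨e, he⟩ := exists_equiv_of_transversal f (hf.mapsTo_of_eq hfα) hTB hT hTcard
  exact ⟨e, fun y hy => he y (hrange ⟨y.2, hy⟩)⟩

theorem unit_regular_element_iff_general {X I : Type*} (idx : X → I)
    (hsurj : Function.Surjective idx) (S : Set (I → I))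
    (f : X → X) (cf : I → I) (hf : IsChar idx f cf) :
    (∃ u, IsUnitTS idx S u ∧ ∀ x, f (u (f x)) = f x) ↔
      ∃ α, IsUnitS S α ∧
        (∀ i, cf (α (cf i)) = cf i) ∧
        (∀ i ∈ Set.range cf, idx ⁻¹' {i} ∩ Set.range f ⊆ f '' (idx ⁻¹' {α i})) ∧
        (∀ i : I, Cardinal.mk ↥(idx ⁻¹' {i}) = Cardinal.mk ↥(idx ⁻¹' {α i})) ∧
        (∀ i ∈ Set.range cf, ∃ T ⊆ idx ⁻¹' {α i},
          (∀ a ∈ idx ⁻¹' {α i}, ∃! t, t ∈ T ∧ f t = f a) ∧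
          Cardinal.mk ↥(idx ⁻¹' {α i} \ T) =
            Cardinal.mk ↥(idx ⁻¹' {i} \ (f '' (idx ⁻¹' {α i})))) := by
  constructor
  · rintro ⟨u, hu, hfuf⟩
    obtain ⟨α, hαS, hα, hbij⟩ := hu.exists_isUnitS_bijOn hsurj
    have hfuf_char : ∀ i, cf (α (cf i)) = cf i := congrFun <|
      ((hf.comp hα).comp hf).unique hsurj (by rwa [show f ∘ u ∘ f = f from funext hfuf])
    refine ⟨α, hαS, hfuf_char, ?_, fun i => mk_congr ((hbij i).equiv u), fun i hi => ?_⟩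
    · rintro i - _ ⟨hx, x, rfl⟩
      exact ⟨u (f x), hα.mapsTo i hx, hfuf x⟩
    · exact exists_transversal_of_bijOn f u (hbij i) (fun x _ => hfuf x)
        (hf.mapsTo_of_eq (apply_apply_eq_of_mem_range hfuf_char hi))
  · rintro ⟨α, ⟨hαS, β, hβS, hβα, hαβ⟩, hα, hrange, hcard, htransversal⟩
    let σ : Equiv.Perm I := ⟨α, β, hβα, hαβ⟩
    have hblock (i : I) : ∃ e : {x // idx x = i} ≃ {x // idx x = σ i},
        i ∈ range cf → ∀ y : {x // idx x = i}, (y : X) ∈ range f → f (e y) = y := by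
      by_cases hi : i ∈ range cf
      · obtain ⟨e, he⟩ := exists_blockEquiv_of_transversal hf (apply_apply_eq_of_mem_range hα hi)
          (hrange i hi) (htransversal i hi)
        exact ⟨e, fun _ => he⟩
      · exact ⟨(Cardinal.eq.mp (hcard i)).some, fun h => absurd h hi⟩
    choose e he using hblock
    refine ⟨fiberwisePerm idx σ e, isUnitTS_of_isChar ⟨hαS, β, hβS, hβα, hαβ⟩
      (isChar_fiberwisePerm σ e), fun x => ?_⟩
    exact he (idx (f x)) ⟨idx x, hf x⟩ ⟨f x, rfl⟩ ⟨x, rfl⟩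

theorem unit_regular_element_iff {X I : Type*} (idx : X → I)
    (hsurj : Function.Surjective idx) (S : Set (I → I))
    (hS : ∀ α ∈ S, ∀ β ∈ S, (fun i => β (α i)) ∈ S)
    (hid : (id : I → I) ∈ S)
    (f : X → X) (cf : I → I) (hf : IsChar idx f cf) (hcf : cf ∈ S) :
    (∃ u, IsUnitTS idx S u ∧ ∀ x, f (u (f x)) = f x) ↔
      ∃ α, IsUnitS S α ∧
        (∀ i, cf (α (cf i)) = cf i) ∧
        (∀ i ∈ Set.range cf, idx ⁻¹' {i} ∩ Set.range f ⊆ f '' (idx ⁻¹' {α i})) ∧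
        (∀ i : I, Cardinal.mk ↥(idx ⁻¹' {i}) = Cardinal.mk ↥(idx ⁻¹' {α i})) ∧
        (∀ i ∈ Set.range cf, ∃ T ⊆ idx ⁻¹' {α i},
          (∀ a ∈ idx ⁻¹' {α i}, ∃! t, t ∈ T ∧ f t = f a) ∧
          Cardinal.mk ↥(idx ⁻¹' {α i} \ T) =
            Cardinal.mk ↥(idx ⁻¹' {i} \ (f '' (idx ⁻¹' {α i})))) :=
  unit_regular_element_iff_general idx hsurj S f cf hf
end

section
/- Assume id_I ∈ S(I). For f, g ∈ T_{S(I)}(X,P): (f,g) ∈ R (Green's R-relation) in T_{S(I)}(X,P) if and only if (χ^(f), χ^(g)) ∈ R in S(I) and ker(f) = ker(g). -/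
/-! `f` lies in `g T_{S(I)}(X,P)` exactly when `χ(f) ∈ S(I)^1 χ(g)` and `ker g ⊆ ker f`:
a factor `h` with `h ∘ g = f` has character `β` with `β ∘ χ(g) = χ(f)`, and conversely `h` is
forced on the image of `g` by the kernel inclusion and can be chosen blockwise elsewhere.
Applying this in both directions gives the `R`-relation. -/

open Function Set

theorem IsChar.comp_s18 {X I : Type*} {idx : X → I} {g h : X → X} {cg ch : I → I}
    (hg : IsChar idx g cg) (hh : IsChar idx h ch) :
    IsChar idx (fun x => h (g x)) (fun i => ch (cg i)) := fun x => by
  dsimp only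
  rw [hg x, hh (g x)]

theorem IsChar.unique_s18 {X I : Type*} {idx : X → I} (hsurj : Surjective idx) {f : X → X}
    {c c' : I → I} (hc : IsChar idx f c) (hc' : IsChar idx f c') : c = c' := by
  funext i
  obtain ⟨x, rfl⟩ := hsurj i
  rw [hc, hc']

/-- Off the image of `g`, the factor sends the block `X_i` to an arbitrary point of the
(nonempty, by surjectivity of `idx`) block `X_{β i}`. -/
theorem exists_isChar_factor {X I : Type*} {idx : X → I} (hsurj : Surjective idx)
    {f g : X → X} {cf cg β : I → I} (hf : IsChar idx f cf) (hg : IsChar idx g cg)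
    (hβ : ∀ i, β (cg i) = cf i) (hker : ∀ x y, g x = g y → f x = f y) :
    ∃ h, IsChar idx h β ∧ ∀ x, h (g x) = f x := by
  classical
  refine ⟨fun y => if hy : ∃ x, g x = y then f hy.choose else (hsurj (β (idx y))).choose,
    fun y => ?_, fun x => ?_⟩
  · by_cases hy : ∃ x, g x = y
    · dsimp only
      rw [dif_pos hy, ← hf, ← hβ, hg, hy.choose_spec]
    · dsimp only
      rw [dif_neg hy, (hsurj (β (idx y))).choose_spec]
  · have hy : ∃ x', g x' = g x := ⟨x, rfl⟩
    dsimp only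
    rw [dif_pos hy]
    exact hker _ _ hy.choose_spec

theorem exists_inTS_factor_iff {X I : Type*} {idx : X → I} (hsurj : Surjective idx)
    {S : Set (I → I)} {f g : X → X} {cf cg : I → I}
    (hf : IsChar idx f cf) (hg : IsChar idx g cg) :
    (∃ h, InTS idx S h ∧ ∀ x, h (g x) = f x) ↔
      (∃ β ∈ S, ∀ i, β (cg i) = cf i) ∧ ∀ x y, g x = g y → f x = f y := by
  constructor
  · rintro ⟨h, ⟨ch, hchS, hch⟩, hhg⟩
    have hchar : IsChar idx f (fun i => ch (cg i)) := funext hhg ▸ hg.comp_s18 hch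
    refine ⟨⟨ch, hchS, congrFun (hchar.unique_s18 hsurj hf)⟩, fun x y hxy => ?_⟩
    rw [← hhg, ← hhg, hxy]
  · rintro ⟨⟨β, hβS, hβ⟩, hker⟩
    obtain ⟨h, hh, hhg⟩ := exists_isChar_factor hsurj hf hg hβ hker
    exact ⟨h, ⟨β, hβS, hh⟩, hhg⟩

theorem exists_mem_comp_eq_or_eq_iff {I : Type*} {S : Set (I → I)} (hid : (id : I → I) ∈ S)
    (a b : I → I) : ((∃ β ∈ S, ∀ i, β (a i) = b i) ∨ b = a) ↔ ∃ β ∈ S, ∀ i, β (a i) = b i :=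
  ⟨fun h => h.elim id fun hba => ⟨id, hid, fun i => (congrFun hba i).symm⟩, Or.inl⟩

theorem R_related_iff_general {X I : Type*} (idx : X → I)
    (hsurj : Function.Surjective idx) (S : Set (I → I))
    (hid : (id : I → I) ∈ S)
    (f g : X → X) (cf cg : I → I)
    (hf : IsChar idx f cf)
    (hg : IsChar idx g cg) :
    ((∃ h, InTS idx S h ∧ ∀ x, h (g x) = f x) ∧
     (∃ k, InTS idx S k ∧ ∀ x, k (f x) = g x)) ↔
      ((((∃ β ∈ S, ∀ i, β (cg i) = cf i) ∨ cf = cg) ∧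
        ((∃ γ ∈ S, ∀ i, γ (cf i) = cg i) ∨ cg = cf)) ∧
       ∀ x y : X, f x = f y ↔ g x = g y) := by
  rw [exists_inTS_factor_iff hsurj hf hg, exists_inTS_factor_iff hsurj hg hf,
    exists_mem_comp_eq_or_eq_iff hid, exists_mem_comp_eq_or_eq_iff hid]
  constructor
  · rintro ⟨⟨hβ, hgf⟩, hγ, hfg⟩
    exact ⟨⟨hβ, hγ⟩, fun x y => ⟨hfg x y, hgf x y⟩⟩
  · rintro ⟨⟨hβ, hγ⟩, hker⟩
    exact ⟨⟨hβ, fun x y => (hker x y).2⟩, hγ, fun x y => (hker x y).1⟩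

theorem R_related_iff {X I : Type*} (idx : X → I)
    (hsurj : Function.Surjective idx) (S : Set (I → I))
    (hS : ∀ α ∈ S, ∀ β ∈ S, (fun i => β (α i)) ∈ S)
    (hid : (id : I → I) ∈ S)
    (f g : X → X) (cf cg : I → I)
    (hf : IsChar idx f cf) (hcf : cf ∈ S)
    (hg : IsChar idx g cg) (hcg : cg ∈ S) :
    ((∃ h, InTS idx S h ∧ ∀ x, h (g x) = f x) ∧
     (∃ k, InTS idx S k ∧ ∀ x, k (f x) = g x)) ↔
      ((((∃ β ∈ S, ∀ i, β (cg i) = cf i) ∨ cf = cg) ∧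
        ((∃ γ ∈ S, ∀ i, γ (cf i) = cg i) ∨ cg = cf)) ∧
       ∀ x y : X, f x = f y ↔ g x = g y) :=
  R_related_iff_general idx hsurj S hid f g cf cg hf hg
end
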